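/- arXiv:1304.0043 — 3 statements merged into one kernel-verified Lean document; each statement's English description precedes it below -/
import Mathlib

section
/- For any prime power q and positive integer n, defining M_q^sym = limsup_{k→∞} μ_q^sym(k)/k, one has M_q^sym ≤ M_{q^n}^sym · μ_q^sym(n). -/
/-!
Fix a field `K` with `q` elements, its extension `L` of degree `n * k`, and the intermediate fields
`F` and `E` of degrees `n` and `k` over `K`. Finite field extensions are determined up to
isomorphism by their cardinalities, so each value of `muSym` involved is the symmetric rank of one
of these extensions. Composing decompositions along `K ⊆ F ⊆ L` and projecting `K`-linearly onto
`E` gives `μ_q(k) ≤ μ_q(n) μ_{q^n}(k)`, hence the bound on the limsup.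

The limsup of a real sequence that is not bounded above is `0`, so the case where `μ_{q^n}(k)/k`
is unbounded needs `μ_q(k)/k` to be unbounded too. This comes from `μ_{q^n}(k) ≤ μ_q(n k)`: the
averaging `ℓ ↦ ∑_{λ ∈ Fˣ} λ⁻¹ ℓ(λ ·)` turns the `K`-linear forms of a decomposition of `L` into
`F`-linear ones, and the product formula survives because `#Fˣ = -1` in `F`.
-/

/-- A symmetric decomposition with `r` summands of the multiplication tensor of a degree-`n`
extension `L` (with `q ^ n` elements) of a finite field `K` with `q` elements. -/
structure SymMulDecomp (q n r : ℕ) where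
  L : Type
  [fieldL : Field L]
  K : Subfield L
  cardL : Nat.card L = q ^ n
  cardK : Nat.card K = q
  x : Fin r → (L →ₗ[K] K)
  c : Fin r → L
  mul_eq : ∀ a b : L, a * b = ∑ i, ((x i a : L) * (x i b : L)) * c i

/-- The symmetric bilinear complexity `μ_q^sym(n)` of multiplication in `F_{q^n}` over `F_q`. -/
noncomputable def muSym (q n : ℕ) : ℕ := sInf { r | Nonempty (SymMulDecomp q n r) }

/-- `M_q^sym = limsup_{k→∞} μ_q^sym(k)/k`. -/
noncomputable def MSym (q : ℕ) : ℝ :=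
  Filter.limsup (fun k : ℕ => (muSym q k : ℝ) / k) Filter.atTop

open Module

section Decomposition

variable (K L : Type*) [Field K] [Field L] [Algebra K L]

def HasSymMulDecomp (r : ℕ) : Prop :=
  ∃ (x : Fin r → L →ₗ[K] K) (c : Fin r → L), ∀ a b : L, a * b = ∑ i, (x i a * x i b) • c i

variable {K L}

theorem hasSymMulDecomp_of_fintype {ι : Type*} [Fintype ι] (x : ι → L →ₗ[K] K) (c : ι → L)
    (h : ∀ a b : L, a * b = ∑ i, (x i a * x i b) • c i) :
    HasSymMulDecomp K L (Fintype.card ι) :=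
  let e := Fintype.equivFin ι
  ⟨x ∘ e.symm, c ∘ e.symm, fun a b => (h a b).trans (e.symm.sum_comp _).symm⟩

theorem HasSymMulDecomp.map {L' : Type*} [Field L'] [Algebra K L'] {r : ℕ} (φ : L ≃ₐ[K] L')
    (h : HasSymMulDecomp K L r) : HasSymMulDecomp K L' r := by
  obtain ⟨x, c, hxc⟩ := h
  refine ⟨fun i => (x i).comp φ.symm.toLinearMap, fun i => φ (c i), fun a b => ?_⟩
  calc a * b = φ (φ.symm a * φ.symm b) := by simp
    _ = _ := by simp [hxc, map_sum]

theorem HasSymMulDecomp.of_ringEquiv {K' : Type*} [Field K'] [Algebra K' L] {r : ℕ}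
    (e : K ≃+* K') (he : ∀ t, algebraMap K' L (e t) = algebraMap K L t)
    (h : HasSymMulDecomp K L r) : HasSymMulDecomp K' L r := by
  obtain ⟨x, c, hxc⟩ := h
  have hsmul (s : K') (a : L) : s • a = e.symm s • a := by
    rw [Algebra.smul_def, Algebra.smul_def, ← he, e.apply_symm_apply]
  refine ⟨fun i => ⟨⟨fun a => e (x i a), fun a b => by simp⟩, fun s a => ?_⟩, c, fun a b => ?_⟩
  · simp [hsmul]
  · simp only [LinearMap.coe_mk, AddHom.coe_mk, ← map_mul, Algebra.smul_def, he]
    simpa only [Algebra.smul_def] using hxc a b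

theorem HasSymMulDecomp.trans {F : Type*} [Field F] [Algebra K F] [Algebra F L]
    [IsScalarTower K F L] {r₁ r₂ : ℕ} (h₁ : HasSymMulDecomp K F r₁)
    (h₂ : HasSymMulDecomp F L r₂) : HasSymMulDecomp K L (r₁ * r₂) := by
  obtain ⟨x, c, hxc⟩ := h₁
  obtain ⟨y, d, hyd⟩ := h₂
  simpa using hasSymMulDecomp_of_fintype
    (fun p : Fin r₁ × Fin r₂ => (x p.1).comp ((y p.2).restrictScalars K))
    (fun p => c p.1 • d p.2) fun a b => by
      rw [hyd, Fintype.sum_prod_type, Finset.sum_comm]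
      refine Finset.sum_congr rfl fun j _ => ?_
      rw [hxc, Finset.sum_smul]
      simp [smul_assoc]

theorem HasSymMulDecomp.tower_bot {E : Type*} [Field E] [Algebra K E] [Algebra E L]
    [IsScalarTower K E L] {r : ℕ} (h : HasSymMulDecomp K L r) : HasSymMulDecomp K E r := by
  obtain ⟨x, c, hxc⟩ := h
  let ι := (IsScalarTower.toAlgHom K E L).toLinearMap
  obtain ⟨π, hπ⟩ := ι.exists_leftInverse_of_injective
    (LinearMap.ker_eq_bot.mpr (algebraMap E L).injective)
  refine ⟨fun i => (x i).comp ι, fun i => π (c i), fun a b => ?_⟩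
  calc a * b = π (algebraMap E L a * algebraMap E L b) := by
        rw [← map_mul]; exact (LinearMap.congr_fun hπ _).symm
    _ = _ := by rw [hxc, map_sum]; simp [ι]

end Decomposition

section Averaging

variable {K F L : Type*} [Field K] [Field F] [Field L]
  [Algebra K F] [Algebra F L] [Algebra K L] [IsScalarTower K F L]

variable (F) in
theorem FiniteField.natCast_card_units_eq_neg_one [Fintype F] [DecidableEq F] (R : Type*) [Ring R]
    [Algebra F R] : (Fintype.card Fˣ : R) = -1 := by
  rw [Fintype.card_units, Nat.cast_sub Fintype.card_pos, ← map_natCast (algebraMap F R),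
    FiniteField.cast_card_eq_zero, map_zero, Nat.cast_one, zero_sub]

variable (F) in
def LinearMap.unitsAverage [Fintype F] [DecidableEq F] (ℓ : L →ₗ[K] K) : L →ₗ[F] F where
  toFun a := ∑ u : Fˣ, (u⁻¹ : Fˣ) * algebraMap K F (ℓ ((u : F) • a))
  map_add' a b := by simp [mul_add, Finset.sum_add_distrib]
  map_smul' s a := by
    rcases eq_or_ne s 0 with rfl | hs
    · simp
    rw [RingHom.id_apply, smul_eq_mul, Finset.mul_sum]
    refine Fintype.sum_equiv (Equiv.mulRight (Units.mk0 s hs)) _ _ fun u => ?_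
    simp only [Equiv.coe_mulRight, Units.val_mul, Units.val_mk0, mul_inv_rev, smul_smul,
      Units.val_inv_eq_inv_val]
    field_simp

theorem HasSymMulDecomp.tower_top [Finite F] {r : ℕ} (h : HasSymMulDecomp K L r) :
    HasSymMulDecomp F L r := by
  cases nonempty_fintype F
  classical
  obtain ⟨x, c, hxc⟩ := h
  refine ⟨fun i => (x i).unitsAverage F, c, fun a b => ?_⟩
  have hunits : ((Fintype.card Fˣ * Fintype.card Fˣ : ℕ) : L) = 1 := by
    rw [Nat.cast_mul, FiniteField.natCast_card_units_eq_neg_one F, neg_one_mul, neg_neg]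
  calc a * b = ((Fintype.card Fˣ * Fintype.card Fˣ : ℕ) : L) * (a * b) := by rw [hunits, one_mul]
    _ = ∑ u : Fˣ, ∑ v : Fˣ, ((u⁻¹ : Fˣ) * (v⁻¹ : Fˣ) : F) • (((u : F) • a) * ((v : F) • b)) := by
      have hinv (u v : Fˣ) : (u : F)⁻¹ * (v : F)⁻¹ * (v * u) = 1 := by field_simp
      simp [smul_smul, hinv, mul_assoc]
    _ = ∑ u : Fˣ, ∑ v : Fˣ, ((u⁻¹ : Fˣ) * (v⁻¹ : Fˣ) : F) •
          ∑ i, (x i ((u : F) • a) * x i ((v : F) • b)) • c i := by simp only [← hxc]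
    _ = _ := by
      simp only [LinearMap.unitsAverage, LinearMap.coe_mk, AddHom.coe_mk, Finset.sum_mul_sum,
        Finset.sum_smul, Finset.smul_sum]
      rw [Finset.sum_comm_cycle]
      refine Finset.sum_congr rfl fun i _ => Finset.sum_congr rfl fun u _ =>
        Finset.sum_congr rfl fun v _ => ?_
      rw [← algebraMap_smul F (x i ((u : F) • a) * x i ((v : F) • b)), smul_smul, map_mul]
      ring_nf

end Averaging

section Existence

variable (K L : Type*) [Field K] [Field L] [Algebra K L]

def symDecomposable : AddSubgroup (L → L → L) where
  carrier := {B | ∃ (r : ℕ) (x : Fin r → L →ₗ[K] K) (c : Fin r → L),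
    ∀ a b, B a b = ∑ i, (x i a * x i b) • c i}
  zero_mem' := ⟨0, Fin.elim0, Fin.elim0, fun _ _ => by simp⟩
  add_mem' := by
    rintro _ _ ⟨r, x, c, hB⟩ ⟨s, y, d, hB'⟩
    exact ⟨r + s, Fin.append x y, Fin.append c d, fun a b => by simp [Fin.sum_univ_add, hB, hB']⟩
  neg_mem' := by
    rintro _ ⟨r, x, c, hB⟩
    exact ⟨r, x, -c, fun a b => by simp [hB]⟩

variable {K L}

theorem smul_mem_symDecomposable (x : L →ₗ[K] K) (c : L) :
    (fun a b => (x a * x b) • c) ∈ symDecomposable K L :=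
  ⟨1, fun _ => x, fun _ => c, fun a b => by simp⟩

-- Polarization without dividing by `2`, so that characteristic `2` is covered.
theorem polarization_mem_symDecomposable (x y : L →ₗ[K] K) (c : L) :
    (fun a b => (x a * y b + y a * x b) • c) ∈ symDecomposable K L := by
  have := sub_mem (sub_mem (smul_mem_symDecomposable (x + y) c) (smul_mem_symDecomposable x c))
    (smul_mem_symDecomposable y c)
  convert this using 1
  ext a b
  simp only [Pi.sub_apply, LinearMap.add_apply, ← sub_smul]
  ring_nf

theorem sum_sum_smul_mem_symDecomposable {d : ℕ} (x : Fin d → L →ₗ[K] K) (m : Fin d → Fin d → L)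
    (hm : ∀ i j, m i j = m j i) :
    (fun a b => ∑ i, ∑ j, (x i a * x j b) • m i j) ∈ symDecomposable K L := by
  induction d with
  | zero =>
    convert zero_mem (symDecomposable K L)
    simp
  | succ d ih =>
    have hsplit : (fun a b => ∑ i, ∑ j, (x i a * x j b) • m i j) =
        (fun a b => (x 0 a * x 0 b) • m 0 0) +
        ∑ j : Fin d, (fun a b => (x 0 a * x j.succ b + x j.succ a * x 0 b) • m 0 j.succ) +
        fun a b => ∑ i : Fin d, ∑ j : Fin d, (x i.succ a * x j.succ b) • m i.succ j.succ := by
      ext a b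
      simp only [Fin.sum_univ_succ, Pi.add_apply, Finset.sum_apply, Finset.sum_add_distrib,
        add_smul, hm _ 0]
      abel
    rw [hsplit]
    exact add_mem (add_mem (smul_mem_symDecomposable _ _)
      (sum_mem fun j _ => polarization_mem_symDecomposable _ _ _)) (ih _ _ fun i j => hm _ _)

theorem exists_hasSymMulDecomp [Module.Finite K L] : ∃ r, HasSymMulDecomp K L r := by
  let b := finBasis K L
  obtain ⟨r, x, c, h⟩ := sum_sum_smul_mem_symDecomposable b.coord (fun i j => b i * b j)
    fun i j => mul_comm _ _
  refine ⟨r, x, c, fun a a' => ?_⟩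
  calc a * a' = (∑ i, b.repr a i • b i) * ∑ j, b.repr a' j • b j := by
        rw [b.sum_repr, b.sum_repr]
    _ = _ := by simpa only [Finset.sum_mul_sum, smul_mul_smul_comm, Basis.coord_apply] using h a a'

end Existence

section FiniteFields

theorem FiniteField.exists_intermediateField_finrank_eq {K L : Type*} [Field K] [Field L]
    [Algebra K L] [Finite L] {m : ℕ} (hm : m ≠ 0) (h : m ∣ finrank K L) :
    ∃ F : IntermediateField K L, finrank K F = m := by
  have : Finite K := Finite.of_injective _ (algebraMap K L).injective
  obtain ⟨p, _⟩ := CharP.exists K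
  have : Fact p.Prime := ⟨CharP.char_is_prime K p⟩
  have : NeZero m := ⟨hm⟩
  obtain ⟨f⟩ := FiniteField.nonempty_algHom_of_finrank_dvd (K := FiniteField.Extension K p m)
    (L := L) (by rwa [FiniteField.finrank_extension])
  exact ⟨f.fieldRange, (AlgEquiv.ofInjectiveField f).toLinearEquiv.finrank_eq.symm.trans
    (FiniteField.finrank_extension K p m)⟩

theorem FiniteField.exists_intermediateField_finrank_eq_mul {K L : Type*} [Field K] [Field L]
    [Algebra K L] [Finite L] {n k : ℕ} (hn : n ≠ 0) (h : finrank K L = n * k) :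
    ∃ F : IntermediateField K L, finrank K F = n ∧ finrank F L = k := by
  obtain ⟨F, hF⟩ := exists_intermediateField_finrank_eq hn (h ▸ dvd_mul_right n k)
  refine ⟨F, hF, Nat.eq_of_mul_eq_mul_left (Nat.pos_of_ne_zero hn) ?_⟩
  rw [← hF, finrank_mul_finrank, h, hF]

theorem FiniteField.nonempty_algEquiv_of_finrank_eq {K L L' : Type*} [Field K] [Field L]
    [Field L'] [Algebra K L] [Algebra K L'] [Finite L'] (h : finrank K L = finrank K L') :
    Nonempty (L ≃ₐ[K] L') := by
  obtain ⟨f⟩ : Nonempty (L →ₐ[K] L') := FiniteField.nonempty_algHom_of_finrank_dvd (h ▸ dvd_rfl)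
  have : Module.Finite K L := finite_of_finrank_pos (h ▸ finrank_pos)
  have hsurj := (LinearMap.injective_iff_surjective_of_finrank_eq_finrank h
    (f := f.toLinearMap)).mp f.injective
  exact ⟨AlgEquiv.ofBijective f ⟨f.injective, hsurj⟩⟩

theorem IsPrimePow.exists_finiteField_extension {q : ℕ} (hq : IsPrimePow q) (n : ℕ) [NeZero n] :
    ∃ (K L : Type) (_ : Field K) (_ : Field L) (_ : Algebra K L) (_ : Finite L),
      Nat.card K = q ∧ finrank K L = n := by
  obtain ⟨p, e, hp, he, rfl⟩ := hq
  have : Fact p.Prime := ⟨hp.nat_prime⟩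
  exact ⟨GaloisField p e, FiniteField.Extension (GaloisField p e) p n, _, _, _, inferInstance,
    GaloisField.card p e he.ne', FiniteField.finrank_extension _ p n⟩

end FiniteFields

section SymRank

variable (K L : Type*) [Field K] [Field L] [Algebra K L]

noncomputable def symRank : ℕ := sInf {r | HasSymMulDecomp K L r}

variable {K L}

theorem symRank_le {r : ℕ} (h : HasSymMulDecomp K L r) : symRank K L ≤ r := Nat.sInf_le h

theorem hasSymMulDecomp_symRank [Module.Finite K L] : HasSymMulDecomp K L (symRank K L) :=
  Nat.sInf_mem exists_hasSymMulDecomp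

variable {E : Type*} [Field E] [Algebra K E] [Algebra E L] [IsScalarTower K E L]

theorem symRank_le_mul [Module.Finite K E] [Module.Finite E L] :
    symRank K L ≤ symRank K E * symRank E L :=
  symRank_le (hasSymMulDecomp_symRank.trans hasSymMulDecomp_symRank)

theorem symRank_tower_bot_le [Module.Finite K L] : symRank K E ≤ symRank K L :=
  symRank_le hasSymMulDecomp_symRank.tower_bot

theorem symRank_tower_top_le [Finite E] [Module.Finite K L] : symRank E L ≤ symRank K L :=
  symRank_le hasSymMulDecomp_symRank.tower_top

end SymRank

section MuSym

variable {K L : Type} [Field K] [Field L] [Algebra K L] [Finite L] {q n r : ℕ}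

theorem SymMulDecomp.hasSymMulDecomp (D : SymMulDecomp q n r) (hK : Nat.card K = q)
    (hL : finrank K L = n) : HasSymMulDecomp K L r := by
  let := D.fieldL
  have : Finite K := Finite.of_injective _ (algebraMap K L).injective
  have : Finite D.L :=
    Nat.finite_of_card_ne_zero (by rw [D.cardL, ← hK]; exact pow_ne_zero _ Nat.card_pos.ne')
  cases nonempty_fintype K
  cases nonempty_fintype D.K
  let e : K ≃+* D.K := FiniteField.ringEquivOfCardEq (by
    rw [Fintype.card_eq_nat_card, Fintype.card_eq_nat_card, hK, D.cardK])
  let : Algebra K D.L := ((algebraMap D.K D.L).comp e.toRingHom).toAlgebra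
  have h₀ : HasSymMulDecomp D.K D.L r :=
    ⟨D.x, D.c, fun a b => by simpa [Subfield.smul_def] using D.mul_eq a b⟩
  have h₁ : HasSymMulDecomp K D.L r := h₀.of_ringEquiv e.symm fun t => by
    simp [RingHom.algebraMap_toAlgebra]
  have hfin : finrank K D.L = n := by
    refine Nat.pow_right_injective (hK ▸ Finite.one_lt_card : 2 ≤ q) ?_
    simp only [← hK, ← natCard_eq_pow_finrank, D.cardL]
  obtain ⟨φ⟩ := FiniteField.nonempty_algEquiv_of_finrank_eq (hfin.trans hL.symm)
  exact h₁.map φ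

theorem HasSymMulDecomp.nonempty_symMulDecomp (h : HasSymMulDecomp K L r) :
    Nonempty (SymMulDecomp (Nat.card K) (finrank K L) r) := by
  let e := (algebraMap K L).rangeRestrictFieldEquiv
  obtain ⟨x, c, hxc⟩ := h.of_ringEquiv e fun t => rfl
  exact ⟨{ L := L, K := (algebraMap K L).fieldRange
           cardL := by rw [natCard_eq_pow_finrank (K := K)]
           cardK := (Nat.card_congr e.toEquiv).symm
           x := x, c := c
           mul_eq := fun a b => by simpa [Subfield.smul_def] using hxc a b }⟩

theorem muSym_eq_symRank (hK : Nat.card K = q) (hL : finrank K L = n) :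
    muSym q n = symRank K L := by
  unfold muSym symRank
  congr 1
  ext r
  constructor
  · rintro ⟨D⟩
    exact D.hasSymMulDecomp hK hL
  · intro h
    subst hK hL
    exact h.nonempty_symMulDecomp

end MuSym

section Limsup

open Filter

theorem limsup_le_mul_limsup {ι : Type*} {f : Filter ι} [f.NeBot] {u v : ι → ℝ} {C : ℝ}
    (hC : 0 ≤ C) (hu : 0 ≤ u) (hv : 0 ≤ v) (huv : ∀ᶠ i in f, u i ≤ C * v i)
    (hbdd : f.IsBoundedUnder (· ≤ ·) u → f.IsBoundedUnder (· ≤ ·) v) :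
    limsup u f ≤ C * limsup v f := by
  by_cases hu' : f.IsBoundedUnder (· ≤ ·) u
  · have hv' := hbdd hu'
    have hCv : f.IsBoundedUnder (· ≤ ·) (fun i => C * v i) := by
      obtain ⟨B, hB⟩ := hv'
      exact ⟨C * B, eventually_map.mpr <| by
        filter_upwards [eventually_map.mp hB] with i hi using mul_le_mul_of_nonneg_left hi hC⟩
    calc limsup u f ≤ limsup (fun i => C * v i) f :=
          limsup_le_limsup huv (isCoboundedUnder_le_of_le f hu) hCv
      _ = C * limsup v f :=
          ((monotone_mul_left_of_nonneg hC).map_limsup_of_continuousAt v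
            (continuous_const_mul C).continuousAt hv' (isCoboundedUnder_le_of_le f hv)).symm
  · rw [Real.limsup_of_not_isBoundedUnder hu']
    by_cases hv' : f.IsBoundedUnder (· ≤ ·) v
    · exact mul_nonneg hC (le_limsup_of_frequently_le (Frequently.of_forall hv) hv')
    · rw [Real.limsup_of_not_isBoundedUnder hv', mul_zero]

theorem isBoundedUnder_of_le_mul_comp {u v : ℕ → ℝ} {n : ℕ} (hn : 0 < n)
    (h : ∀ᶠ k in atTop, v k ≤ n * u (n * k)) (hu : atTop.IsBoundedUnder (· ≤ ·) u) :
    atTop.IsBoundedUnder (· ≤ ·) v := by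
  obtain ⟨B, hB⟩ := hu
  refine ⟨n * B, eventually_map.mpr ?_⟩
  filter_upwards [h, (tendsto_id.const_mul_atTop' hn).eventually (eventually_map.mp hB)]
    with k hk hkB
  exact hk.trans (mul_le_mul_of_nonneg_left hkB n.cast_nonneg)

end Limsup

theorem muSym_le_mul_muSym_pow {q n k : ℕ} (hq : IsPrimePow q) (hn : n ≠ 0) (hk : k ≠ 0) :
    muSym q k ≤ muSym q n * muSym (q ^ n) k := by
  have : NeZero (n * k) := ⟨mul_ne_zero hn hk⟩
  obtain ⟨K, L, _, _, _, _, hK, hL⟩ := hq.exists_finiteField_extension (n * k)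
  obtain ⟨F, hF, hFL⟩ := FiniteField.exists_intermediateField_finrank_eq_mul hn hL
  obtain ⟨E, hE, -⟩ :=
    FiniteField.exists_intermediateField_finrank_eq_mul hk (hL.trans (mul_comm n k))
  have hcardF : Nat.card F = q ^ n := by rw [natCard_eq_pow_finrank (K := K), hK, hF]
  rw [muSym_eq_symRank hK hE, muSym_eq_symRank hK hF, muSym_eq_symRank hcardF hFL]
  exact symRank_tower_bot_le.trans symRank_le_mul

theorem muSym_pow_le {q n k : ℕ} (hq : IsPrimePow q) (hn : n ≠ 0) (hk : k ≠ 0) :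
    muSym (q ^ n) k ≤ muSym q (n * k) := by
  have : NeZero (n * k) := ⟨mul_ne_zero hn hk⟩
  obtain ⟨K, L, _, _, _, _, hK, hL⟩ := hq.exists_finiteField_extension (n * k)
  obtain ⟨F, hF, hFL⟩ := FiniteField.exists_intermediateField_finrank_eq_mul hn hL
  have hcardF : Nat.card F = q ^ n := by rw [natCard_eq_pow_finrank (K := K), hK, hF]
  rw [muSym_eq_symRank hK hL, muSym_eq_symRank hcardF hFL]
  exact symRank_tower_top_le

theorem MSym_le (q n : ℕ) (hq : IsPrimePow q) (hn : 0 < n) :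
    MSym q ≤ MSym (q ^ n) * (muSym q n : ℝ) := by
  have hne : ∀ᶠ k : ℕ in Filter.atTop, k ≠ 0 := Filter.eventually_ne_atTop 0
  rw [MSym, MSym, mul_comm]
  refine limsup_le_mul_limsup (Nat.cast_nonneg _) (fun k => by positivity)
    (fun k => by positivity) ?_ (isBoundedUnder_of_le_mul_comp hn ?_)
  · filter_upwards [hne] with k hk
    rw [mul_div_assoc']
    gcongr
    exact_mod_cast muSym_le_mul_muSym_pow hq hn.ne' hk
  · filter_upwards [hne] with k hk
    calc (muSym (q ^ n) k : ℝ) / k ≤ muSym q (n * k) / k := by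
          gcongr
          exact_mod_cast muSym_pow_le hq hn.ne' hk
      _ = n * (muSym q (n * k) / (n * k : ℕ)) := by
          push_cast
          field_simp
end

section
/- Assume that for every prime power Q with Q ≥ 16 one has m_{Q}^sym ≤ 2(1 + 1/(√Q − 3)) when Q is a square with √Q ≥ 4, and that μ_q^sym(2) = 3 and m_q^sym ≤ m_{q^2}^sym · μ_q^sym(2)/2 for all prime powers q. Then for every prime power q > 3, m_q^sym ≤ 3(1 + 1/(q−3)). -/
/-- `m_q^sym = liminf_{k→∞} μ_q^sym(k)/k`. -/
noncomputable def mSym (q : ℕ) : ℝ :=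
  Filter.liminf (fun k : ℕ => (muSym q k : ℝ) / k) Filter.atTop

theorem mSym_le_of_square_bound
    (h1 : ∀ Q r : ℕ, IsPrimePow Q → 16 ≤ Q → Q = r ^ 2 → 4 ≤ r →
      mSym Q ≤ 2 * (1 + 1 / ((r : ℝ) - 3)))
    (h2 : ∀ q : ℕ, IsPrimePow q → muSym q 2 = 3)
    (h3 : ∀ q : ℕ, IsPrimePow q → mSym q ≤ mSym (q ^ 2) * (muSym q 2 : ℝ) / 2) :
    ∀ q : ℕ, IsPrimePow q → 3 < q → mSym q ≤ 3 * (1 + 1 / ((q : ℝ) - 3)) := by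
  intro q hq hq3
  have hsquare := h1 (q ^ 2) q (hq.pow two_ne_zero) (by nlinarith) rfl hq3
  have htransfer := h3 q hq
  rw [h2 q hq] at htransfer
  push_cast at htransfer
  linarith
end

section
/- For every real t ≥ 1 and every real q ≥ 15, one has 3(1 + 1/(q−3)) ≤ (4 − 1/t)(1 + 4/(q^t − 5)), i.e. the bound of Proposition 3 beats the best-possible form of bound (3) from Theorem 5 for all q ≥ 15. -/
/-!
For `t ≥ 2` the factor `4 - 1/t ≥ 7/2` alone exceeds `3 (1 + 1/12)`. For `1 ≤ t ≤ 2`,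
Bernoulli's inequality `q ^ (t - 1) ≤ 1 + (t - 1)(q - 1)` bounds `q ^ t = q * q ^ (t - 1)` from
above, and with this bound substituted the claim becomes a polynomial inequality:
after clearing denominators it is a quadratic in `t - 1` with positive leading coefficient and
negative discriminant once `q ≥ 15`.
-/

namespace Real

theorem rpow_le_mul_one_add_mul {q t : ℝ} (hq : 0 ≤ q) (ht₁ : 1 ≤ t) (ht₂ : t ≤ 2) :
    q ^ t ≤ q * (1 + (t - 1) * (q - 1)) := by
  have hbernoulli : q ^ (t - 1) ≤ 1 + (t - 1) * (q - 1) := by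
    simpa using rpow_one_add_le_one_add_mul_self (s := q - 1) (by linarith)
      (p := t - 1) (by linarith) (by linarith)
  calc q ^ t = q ^ (1 + (t - 1)) := by ring_nf
    _ = q * q ^ (t - 1) := by rw [rpow_add' hq (by linarith), rpow_one]
    _ ≤ q * (1 + (t - 1) * (q - 1)) := by gcongr

end Real

theorem quadratic_nonneg_of_discrim_nonpos {K : Type*} [Field K] [LinearOrder K]
    [IsStrictOrderedRing K] {a b c : K} (ha : 0 < a) (h : discrim a b c ≤ 0) (x : K) :
    0 ≤ a * (x * x) + b * x + c := by
  have hsq : 4 * a * (a * (x * x) + b * x + c) = (2 * a * x + b) ^ 2 - discrim a b c := by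
    rw [discrim]; ring
  have : 0 ≤ 4 * a * (a * (x * x) + b * x + c) := by
    rw [hsq]; linarith [sq_nonneg (2 * a * x + b)]
  exact nonneg_of_mul_nonneg_right (by linarith) (by linarith : 0 < 4 * a)

theorem prop3_le_bound3_bernoulli {q t : ℝ} (hq : 15 ≤ q) (ht : 1 ≤ t) :
    3 * (1 + 1 / (q - 3)) ≤ (4 - 1 / t) * (1 + 4 / (q * (1 + (t - 1) * (q - 1)) - 5)) := by
  set U := q * (1 + (t - 1) * (q - 1)) with hU
  have hU5 : 10 ≤ U - 5 := by
    have : 0 ≤ q * ((t - 1) * (q - 1)) := by apply mul_nonneg <;> nlinarith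
    linarith
  have hdiscrim : discrim (q * (q - 1) * (q - 6)) (-(2 * q ^ 2 - 8 * q + 18)) (3 * (3 * q - 7))
      ≤ 0 := by
    have h15 : 0 ≤ q - 15 := by linarith
    rw [discrim]
    nlinarith [pow_nonneg h15 2, pow_nonneg h15 3, pow_nonneg h15 4]
  have hquad := quadratic_nonneg_of_discrim_nonpos
    (mul_pos (mul_pos (by linarith) (by linarith)) (by linarith)) hdiscrim (t - 1)
  have hpoly : 3 * (q - 2) * (t * (U - 5)) ≤ (4 * t - 1) * (U - 1) * (q - 3) := by
    rw [hU]; linear_combination hquad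
  calc 3 * (1 + 1 / (q - 3)) = 3 * (q - 2) / (q - 3) := by
        field_simp [show q - 3 ≠ 0 by linarith]; ring
    _ ≤ (4 * t - 1) * (U - 1) / (t * (U - 5)) := by
      rw [div_le_div_iff₀ (by linarith) (by positivity)]; exact hpoly
    _ = (4 - 1 / t) * (1 + 4 / (U - 5)) := by field_simp; ring

theorem prop3_beats_bound3 (t q : ℝ) (ht : 1 ≤ t) (hq : 15 ≤ q) :
    3 * (1 + 1 / (q - 3)) ≤ (4 - 1 / t) * (1 + 4 / (q ^ t - 5)) := by
  have hqt : q ≤ q ^ t := Real.self_le_rpow_of_one_le (by linarith) ht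
  have hleft : 3 * (1 + 1 / (q - 3)) ≤ 13 / 4 := by
    have : 1 / (q - 3) ≤ 1 / 12 := one_div_le_one_div_of_le (by norm_num) (by linarith)
    linarith
  rcases le_total t 2 with ht₂ | ht₂
  · calc 3 * (1 + 1 / (q - 3))
        ≤ (4 - 1 / t) * (1 + 4 / (q * (1 + (t - 1) * (q - 1)) - 5)) :=
          prop3_le_bound3_bernoulli hq ht
      _ ≤ (4 - 1 / t) * (1 + 4 / (q ^ t - 5)) := by
          have ht_inv : 1 / t ≤ 1 := by rw [div_le_one (by linarith)]; exact ht
          gcongr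
          · linarith
          · linarith
          · exact Real.rpow_le_mul_one_add_mul (by linarith) ht ht₂
  · have h4 : 0 ≤ 4 / (q ^ t - 5) := div_nonneg (by norm_num) (by linarith)
    have h1t : 1 / t ≤ 1 / 2 := one_div_le_one_div_of_le (by norm_num) ht₂
    nlinarith
end
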